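/- Let G = N ⋊ S be a semidirect product of a Lie group N with a connected Lie group S whose Lie algebra is perfect. Let (π₁, H) and (π₂, H) be strongly continuous unitary representations of G on the same Hilbert space such that π₁|_N = π₂|_N and π₁|_N is irreducible. Then π₁ = π₂. -/

import Mathlib

noncomputable section

open Complex Filter Topology

/-! ## Core definitions: unitary representations, energy conditions, the group `N` -/

section Reps

variable {G : Type*} [Group G] [TopologicalSpace G]
variable {H : Type*} [NormedAddCommGroup H] [InnerProductSpace ℂ H]
variable {H' : Type*} [NormedAddCommGroup H'] [InnerProductSpace ℂ H']

/-- A representation is *strongly continuous* if all orbit maps are continuous. -/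
def StronglyContinuous (π : G →* (H ≃ₗᵢ[ℂ] H)) : Prop :=
  ∀ v : H, Continuous fun g => π g v

/-- A (complex) subspace is invariant under a representation. -/
def IsInvariantSubspace (π : G →* (H ≃ₗᵢ[ℂ] H)) (K : Submodule ℂ H) : Prop :=
  ∀ g : G, ∀ v ∈ K, π g v ∈ K

/-- Irreducibility: no nontrivial closed invariant subspaces. -/
def IsIrreducibleRep (π : G →* (H ≃ₗᵢ[ℂ] H)) : Prop :=
  ∀ K : Submodule ℂ H, IsClosed (K : Set H) → IsInvariantSubspace π K → K = ⊥ ∨ K = ⊤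

/-- Unitary equivalence of representations. -/
def AreUnitarilyEquivalent (π : G →* (H ≃ₗᵢ[ℂ] H)) (ρ : G →* (H' ≃ₗᵢ[ℂ] H')) : Prop :=
  ∃ U : H ≃ₗᵢ[ℂ] H', ∀ (g : G) (v : H), U (π g v) = ρ g (U v)

/-- The restriction of an isometry to an invariant subspace (invariant together with
its inverse). -/
def LinearIsometryEquiv.restrictSubmodule (e : H ≃ₗᵢ[ℂ] H) (K : Submodule ℂ H)
    (h1 : ∀ v ∈ K, e v ∈ K) (h2 : ∀ v ∈ K, e.symm v ∈ K) : K ≃ₗᵢ[ℂ] K where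
  toFun v := ⟨e v, h1 v v.2⟩
  invFun v := ⟨e.symm v, h2 v v.2⟩
  left_inv v := by ext; simp
  right_inv v := by ext; simp
  map_add' a b := by ext; simp
  map_smul' c a := by ext; simp
  norm_map' a := by simp

/-- The subrepresentation of `π` on a `π`-invariant subspace `K`. -/
def restrictRep (π : G →* (H ≃ₗᵢ[ℂ] H)) (K : Submodule ℂ H)
    (hK : IsInvariantSubspace π K) : G →* (K ≃ₗᵢ[ℂ] K) where
  toFun g := (π g).restrictSubmodule K (hK g) (by
      intro v hv
      have := hK g⁻¹ v hv
      simpa using this)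
  map_one' := by
    ext v
    simp [LinearIsometryEquiv.restrictSubmodule]
  map_mul' g g' := by
    ext v
    simp [LinearIsometryEquiv.restrictSubmodule]
    rfl

end Reps

section Energy

variable {H : Type*} [NormedAddCommGroup H] [InnerProductSpace ℂ H]

/-- The self-adjoint generator of the strongly continuous unitary one-parameter group `U`
has non-negative spectrum.  This is encoded through the standard characterization by
bounded holomorphic extensions of the orbit maps to the upper half-plane. -/
def HasNonnegativeGenerator (U : ℝ → H → H) : Prop :=
  ∀ v : H, ∃ F : ℂ → H,
    ContinuousOn F {z : ℂ | 0 ≤ z.im} ∧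
    DifferentiableOn ℂ F {z : ℂ | 0 < z.im} ∧
    (∀ t : ℝ, F (t : ℂ) = U t v) ∧
    (∀ z : ℂ, 0 ≤ z.im → ‖F z‖ ≤ ‖v‖)

/-- The self-adjoint generator of the strongly continuous unitary one-parameter group `U`
has strictly positive spectrum, i.e. its spectral measure is supported in `(0,∞)`.
This is encoded through the standard characterization: orbit maps have bounded
holomorphic extensions to the upper half-plane that vanish at `i∞`. -/
def HasStrictlyPositiveGenerator (U : ℝ → H → H) : Prop :=
  ∀ v : H, ∃ F : ℂ → H,
    ContinuousOn F {z : ℂ | 0 ≤ z.im} ∧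
    DifferentiableOn ℂ F {z : ℂ | 0 < z.im} ∧
    (∀ t : ℝ, F (t : ℂ) = U t v) ∧
    (∀ z : ℂ, 0 ≤ z.im → ‖F z‖ ≤ ‖v‖) ∧
    Tendsto (fun y : ℝ => F (y * Complex.I)) atTop (nhds 0)

/-- Strictly negative spectrum of the generator. -/
def HasStrictlyNegativeGenerator (U : ℝ → H → H) : Prop :=
  HasStrictlyPositiveGenerator (fun t => U (-t))

end Energy



/-! ## Statement 10

Let `G = N ⋊ S` be a semidirect product of a Lie group `N` with a connected Lie group `S`
whose Lie algebra is perfect.  If two strongly continuous unitary representations of `G` on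
the same Hilbert space agree on `N` and their common restriction to `N` is irreducible,
then they are equal.

For a connected Lie group `S`, perfectness of the Lie algebra of `S` is equivalent to the
commutator subgroup of `S` being dense in `S`; the latter formulation is used here. -/

/-- The product topology on a semidirect product of topological groups. -/
instance {N G : Type*} [Group N] [Group G] [TopologicalSpace N] [TopologicalSpace G]
    (φ : G →* MulAut N) : TopologicalSpace (N ⋊[φ] G) :=
  TopologicalSpace.induced (fun g => (g.left, g.right)) instTopologicalSpaceProd


/-! For `s ∈ S`, conjugation by `π₁ (inr s)` and by `π₂ (inr s)` acts on `π₁|_N = π₂|_N` in the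
same way, so the unitary `π₂(s)⁻¹ π₁(s)` commutes with the irreducible `π₁|_N` and is a scalar by
Schur's lemma. These scalars form a character of `S`, which kills the commutator subgroup; hence
`π₁` and `π₂` agree on it, and by strong continuity on its closure, which is `S`.

Schur's lemma comes from the continuous functional calculus: two distinct points of the spectrum
of a normal intertwiner `T` give nonzero `f(T)`, `g(T)` with `g(T) f(T) = 0`, while `f(T)` has
dense range by irreducibility. -/

open SemidirectProduct

theorem exists_cfc_ne_zero_mul_eq_zero {A : Type*} [CStarAlgebra A] {a : A} [IsStarNormal a] {z₁ z₂ : ℂ}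
    (h₁ : z₁ ∈ spectrum ℂ a) (h₂ : z₂ ∈ spectrum ℂ a) (hne : z₁ ≠ z₂) :
    ∃ f g : ℂ → ℂ, cfc f a ≠ 0 ∧ cfc g a ≠ 0 ∧ cfc g a * cfc f a = 0 := by
  obtain ⟨r, hr, hdist⟩ : ∃ r : ℝ, 0 < r ∧ dist z₁ z₂ = 2 * r :=
    ⟨dist z₁ z₂ / 2, half_pos (dist_pos.2 hne), by ring⟩
  let bump (z₀ z : ℂ) : ℂ := ((r - dist z z₀) ⊔ 0 : ℝ)
  have hbump_cont (z₀ : ℂ) : Continuous (bump z₀) := by fun_prop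
  have hbump_center (z₀ : ℂ) : bump z₀ z₀ ≠ 0 := by
    simp [bump, hr.le, hr.ne']
  have hbump_mul (z : ℂ) : bump z₂ z * bump z₁ z = 0 := by
    by_contra h
    have hz₁ : dist z z₁ < r := by
      by_contra! h'; exact h (by simp [bump, h'])
    have hz₂ : dist z z₂ < r := by
      by_contra! h'; exact h (by simp [bump, h'])
    linarith [dist_triangle_left z₁ z₂ z]
  have hcfc_ne (z₀ : ℂ) (hz₀ : z₀ ∈ spectrum ℂ a) : cfc (bump z₀) a ≠ 0 := fun h =>
    hbump_center z₀ (eqOn_of_cfc_eq_cfc (h.trans (cfc_zero ℂ a).symm)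
      (hbump_cont z₀).continuousOn continuousOn_const inferInstance hz₀)
  refine ⟨bump z₁, bump z₂, hcfc_ne z₁ h₁, hcfc_ne z₂ h₂, ?_⟩
  rw [← cfc_mul (bump z₂) (bump z₁) a]
  simp [hbump_mul]

namespace IsIrreducibleRep

variable {G : Type*} [Group G]
variable {H : Type*} [NormedAddCommGroup H] [InnerProductSpace ℂ H]
variable {π : G →* (H ≃ₗᵢ[ℂ] H)}

theorem eq_zero_of_mul_eq_zero (hπ : IsIrreducibleRep π) {A B : H →L[ℂ] H}
    (hA : ∀ g, Commute A (π g : H →L[ℂ] H)) (hA₀ : A ≠ 0) (hBA : B * A = 0) : B = 0 := by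
  set R := LinearMap.range (A : H →ₗ[ℂ] H)
  have hR : IsClosed (R.topologicalClosure : Set H) := R.isClosed_topologicalClosure
  have hinv : IsInvariantSubspace π R.topologicalClosure := by
    intro g v hv
    have hrange : R ≤ R.topologicalClosure.comap (π g : H →ₗ[ℂ] H) := by
      rintro _ ⟨u, rfl⟩
      have hcomm : A (π g u) = π g (A u) := congr($(hA g) u)
      simpa [← hcomm] using R.le_topologicalClosure ⟨π g u, rfl⟩
    exact R.topologicalClosure_minimal hrange (hR.preimage (π g : H →L[ℂ] H).continuous) hv
  rcases hπ _ hR hinv with hbot | htop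
  · refine absurd (ContinuousLinearMap.ext fun u => ?_) hA₀
    simpa [hbot] using R.le_topologicalClosure ⟨u, rfl⟩
  · have hker : R.topologicalClosure ≤ LinearMap.ker (B : H →ₗ[ℂ] H) :=
      R.topologicalClosure_minimal (by rintro _ ⟨u, rfl⟩; exact congr($hBA u)) B.isClosed_ker
    ext v
    simpa using hker (htop ▸ Submodule.mem_top : v ∈ R.topologicalClosure)

theorem exists_eq_algebraMap_of_commute [CompleteSpace H] (hπ : IsIrreducibleRep π)
    {T : H →L[ℂ] H} [IsStarNormal T] (hT : ∀ g, Commute T (π g : H →L[ℂ] H))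
    (hT' : ∀ g, Commute (star T) (π g : H →L[ℂ] H)) :
    ∃ c : ℂ, T = algebraMap ℂ (H →L[ℂ] H) c := by
  have hspec : (spectrum ℂ T).Subsingleton := by
    intro z₁ h₁ z₂ h₂
    by_contra hne
    obtain ⟨f, g, hf, hg, hgf⟩ := exists_cfc_ne_zero_mul_eq_zero h₁ h₂ hne
    exact hg (hπ.eq_zero_of_mul_eq_zero (fun x => (hT x).cfc (hT' x) f) hf hgf)
  obtain ⟨c, hc⟩ : ∃ c, spectrum ℂ T ⊆ {c} := by
    rcases hspec.eq_empty_or_singleton with h | ⟨c, h⟩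
    · exact ⟨0, by simp [h]⟩
    · exact ⟨c, h.le⟩
  exact ⟨c, CFC.eq_algebraMap_of_spectrum_subset_singleton T c hc⟩

theorem exists_eq_smul_of_commute [CompleteSpace H] (hπ : IsIrreducibleRep π)
    {e : H ≃ₗᵢ[ℂ] H} (he : ∀ g, Commute e (π g)) : ∃ c : ℂ, ∀ v, e v = c • v := by
  have hnormal : IsStarNormal (e : H →L[ℂ] H) :=
    isStarNormal_of_mem_unitary (Unitary.linearIsometryEquiv.symm e).prop
  have hstar : star (e : H →L[ℂ] H) = (e⁻¹ : H ≃ₗᵢ[ℂ] H) := by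
    rw [ContinuousLinearMap.star_eq_adjoint, LinearIsometryEquiv.adjoint_eq_symm]
    rfl
  obtain ⟨c, hc⟩ := hπ.exists_eq_algebraMap_of_commute (T := (e : H →L[ℂ] H))
    (fun g => ContinuousLinearMap.ext fun v => congr($(he g) v))
    (fun g => hstar ▸ ContinuousLinearMap.ext fun v => congr($((he g).inv_left) v))
  exact ⟨c, fun v => by simpa using congr($hc v)⟩

end IsIrreducibleRep

theorem LinearIsometryEquiv.mem_center_of_forall_eq_smul {H : Type*} [NormedAddCommGroup H]
    [InnerProductSpace ℂ H] {e : H ≃ₗᵢ[ℂ] H} {c : ℂ} (he : ∀ v, e v = c • v) :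
    e ∈ Subgroup.center (H ≃ₗᵢ[ℂ] H) :=
  Subgroup.mem_center_iff.2 fun f => LinearIsometryEquiv.ext fun v => by
    simp only [LinearIsometryEquiv.coe_mul, Function.comp_apply, he, map_smul]

open scoped IsMulCommutative in
theorem MonoidHom.commutator_le_eqLocus_of_mem_center {S K : Type*} [Group S] [Group K]
    (ρ₁ ρ₂ : S →* K) (h : ∀ s, (ρ₂ s)⁻¹ * ρ₁ s ∈ Subgroup.center K) :
    commutator S ≤ ρ₁.eqLocus ρ₂ := by
  let τ : S →* K :=
    { toFun s := (ρ₂ s)⁻¹ * ρ₁ s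
      map_one' := by simp
      map_mul' s t := by
        calc (ρ₂ (s * t))⁻¹ * ρ₁ (s * t) = (ρ₂ t)⁻¹ * ((ρ₂ s)⁻¹ * ρ₁ s) * ρ₁ t := by
              simp only [map_mul]; group
          _ = (ρ₂ s)⁻¹ * ρ₁ s * ((ρ₂ t)⁻¹ * ρ₁ t) := by
              rw [Subgroup.mem_center_iff.1 (h s)]; group }
  intro x hx
  have hτ : τ x = 1 := by
    simpa using Abelianization.commutator_subset_ker (τ.codRestrict _ h) hx
  exact (inv_mul_eq_one.1 hτ).symm

theorem SemidirectProduct.commute_inv_mul_map_inr {N S K : Type*} [Group N] [Group S] [Group K]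
    {φ : S →* MulAut N} {π₁ π₂ : N ⋊[φ] S →* K} (h : π₁.comp inl = π₂.comp inl) (s : S)
    (n : N) : Commute ((π₂ (inr s))⁻¹ * π₁ (inr s)) (π₁ (inl n)) := by
  have hconj : π₁ (inr s) * π₁ (inl n) * (π₁ (inr s))⁻¹
      = π₂ (inr s) * π₁ (inl n) * (π₂ (inr s))⁻¹ := by
    have h₁ := congrArg π₁ (inl_aut s n)
    have h₂ := congrArg π₂ (inl_aut s n)
    simp only [map_mul, map_inv] at h₁ h₂
    rw [← h₁, show π₁ (inl n) = π₂ (inl n) from DFunLike.congr_fun h n, ← h₂]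
    exact DFunLike.congr_fun h (φ s n)
  calc (π₂ (inr s))⁻¹ * π₁ (inr s) * π₁ (inl n)
      = (π₂ (inr s))⁻¹ * (π₁ (inr s) * π₁ (inl n) * (π₁ (inr s))⁻¹) * π₁ (inr s) := by group
    _ = π₁ (inl n) * ((π₂ (inr s))⁻¹ * π₁ (inr s)) := by rw [hconj]; group

theorem SemidirectProduct.continuous_inr {N S : Type*} [Group N] [Group S] [TopologicalSpace N]
    [TopologicalSpace S] {φ : S →* MulAut N} : Continuous (inr : S → N ⋊[φ] S) :=
  continuous_induced_rng.2 (continuous_const.prodMk continuous_id)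

namespace StronglyContinuous

variable {G : Type*} [Group G] [TopologicalSpace G]
variable {H : Type*} [NormedAddCommGroup H] [InnerProductSpace ℂ H]

theorem comp {G' : Type*} [Group G'] [TopologicalSpace G'] {π : G →* (H ≃ₗᵢ[ℂ] H)}
    (hπ : StronglyContinuous π) {f : G' →* G} (hf : Continuous f) :
    StronglyContinuous (π.comp f) :=
  fun v => (hπ v).comp hf

theorem isClosed_eqLocus {ρ₁ ρ₂ : G →* (H ≃ₗᵢ[ℂ] H)} (h₁ : StronglyContinuous ρ₁)
    (h₂ : StronglyContinuous ρ₂) : IsClosed (ρ₁.eqLocus ρ₂ : Set G) := by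
  have hlocus : (ρ₁.eqLocus ρ₂ : Set G) = ⋂ v, {g | ρ₁ g v = ρ₂ g v} := by
    ext g
    simp only [SetLike.mem_coe, Set.mem_iInter, Set.mem_ofPred_eq]
    exact LinearIsometryEquiv.ext_iff
  rw [hlocus]
  exact isClosed_iInter fun v => isClosed_eq (h₁ v) (h₂ v)

end StronglyContinuous

theorem statement_10_general
    {N : Type} [Group N] [TopologicalSpace N]
    {S : Type} [Group S] [TopologicalSpace S] [IsTopologicalGroup S]
    (hSperf : (commutator S).topologicalClosure = ⊤)
    (φ : S →* MulAut N)
    {H : Type} [NormedAddCommGroup H] [InnerProductSpace ℂ H] [CompleteSpace H]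
    (π₁ π₂ : (N ⋊[φ] S) →* (H ≃ₗᵢ[ℂ] H))
    (hcont₁ : StronglyContinuous π₁) (hcont₂ : StronglyContinuous π₂)
    -- `π₁` and `π₂` agree on `N`
    (hagree : ∀ n : N, π₁ (SemidirectProduct.inl n) = π₂ (SemidirectProduct.inl n))
    -- `π₁|_N` is irreducible
    (hirr : IsIrreducibleRep (π₁.comp (SemidirectProduct.inl (φ := φ)))) :
    π₁ = π₂ := by
  have hinl : π₁.comp inl = π₂.comp inl := MonoidHom.ext hagree
  have hcentral (s : S) : (π₂ (inr s))⁻¹ * π₁ (inr s) ∈ Subgroup.center (H ≃ₗᵢ[ℂ] H) := by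
    obtain ⟨c, hc⟩ := hirr.exists_eq_smul_of_commute (commute_inv_mul_map_inr hinl s)
    exact LinearIsometryEquiv.mem_center_of_forall_eq_smul hc
  have hclosure : (commutator S).topologicalClosure ≤ (π₁.comp inr).eqLocus (π₂.comp inr) :=
    Subgroup.topologicalClosure_minimal _
      ((π₁.comp inr).commutator_le_eqLocus_of_mem_center (π₂.comp inr) hcentral)
      ((hcont₁.comp continuous_inr).isClosed_eqLocus (hcont₂.comp continuous_inr))
  have hinr : π₁.comp inr = π₂.comp inr :=
    MonoidHom.eq_of_eqOn_top fun s _ => hclosure (hSperf ▸ Subgroup.mem_top s)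
  exact SemidirectProduct.hom_ext hinl hinr

theorem statement_10
    {N : Type} [Group N] [TopologicalSpace N] [IsTopologicalGroup N]
    {S : Type} [Group S] [TopologicalSpace S] [IsTopologicalGroup S]
    -- `S` is connected, with perfect Lie algebra (equivalently, dense commutator subgroup)
    (hSconn : ConnectedSpace S)
    (hSperf : (commutator S).topologicalClosure = ⊤)
    (φ : S →* MulAut N)
    {H : Type} [NormedAddCommGroup H] [InnerProductSpace ℂ H] [CompleteSpace H]
    (π₁ π₂ : (N ⋊[φ] S) →* (H ≃ₗᵢ[ℂ] H))
    (hcont₁ : StronglyContinuous π₁) (hcont₂ : StronglyContinuous π₂)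
    -- `π₁` and `π₂` agree on `N`
    (hagree : ∀ n : N, π₁ (SemidirectProduct.inl n) = π₂ (SemidirectProduct.inl n))
    -- `π₁|_N` is irreducible
    (hirr : IsIrreducibleRep (π₁.comp (SemidirectProduct.inl (φ := φ)))) :
    π₁ = π₂ :=
  statement_10_general hSperf φ π₁ π₂ hcont₁ hcont₂ hagree hirr
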